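/- arXiv:0912.0051 — 2 statements merged into one kernel-verified Lean document; each statement's English description precedes it below -/
import Mathlib

section
/- Let X be a nonempty type and let τ be a topology on the semigroup of matrix units B_λ (λ = |X|) making it a topological semigroup such that the band E(B_λ) = {(a,a) : a ∈ X} ∪ {0} is a compact subset. Then (B_λ, τ) is an H-closed topological semigroup: for every topological semigroup T and every injective semigroup homomorphism f : B_λ → T that is a topological embedding, the image f(B_λ) is closed in T. -/
open scoped Classical
open Filter Topology

universe u v

/-- The semigroup of λ×λ-matrix units over the index type `X` (of cardinality λ):
the set `(X × X) ∪ {0}`, realized as `Option (X × X)` with `none` as the zero. -/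
abbrev MatrixUnits (X : Type u) : Type u := Option (X × X)

/-- Multiplication of matrix units: `(a,b)·(c,d) = (a,d)` if `b = c`, and `0` otherwise;
`0` is a two-sided zero. -/
noncomputable def muMul {X : Type u} : MatrixUnits X → MatrixUnits X → MatrixUnits X
  | some (a, b), some (c, d) => if b = c then some (a, d) else none
  | none, _ => none
  | some _, none => none

noncomputable instance {X : Type u} : Semigroup (MatrixUnits X) where
  mul := muMul
  mul_assoc x y z := by
    show muMul (muMul x y) z = muMul x (muMul y z)
    rcases x with _ | ⟨a, b⟩ <;> rcases y with _ | ⟨c, d⟩ <;> rcases z with _ | ⟨e, f⟩ <;>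
      simp only [muMul] <;> split_ifs <;> simp_all [muMul]

/-- The band (set of idempotents) of the semigroup of matrix units:
`{(a,a) : a ∈ X} ∪ {0}`. -/
def MUBand (X : Type u) : Set (MatrixUnits X) :=
  insert none {x : MatrixUnits X | ∃ a : X, x = some (a, a)}

theorem mu_mul_def {X : Type u} (x y : MatrixUnits X) : x * y = muMul x y := rfl

theorem some_mul_some {X : Type u} (a b c d : X) :
    (some (a, b) * some (c, d) : MatrixUnits X) = if b = c then some (a, d) else none := rfl

theorem none_mul' {X : Type u} (x : MatrixUnits X) : (none : MatrixUnits X) * x = none := rfl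

theorem mul_none' {X : Type u} (x : MatrixUnits X) : x * (none : MatrixUnits X) = none := by
  rcases x with _ | ⟨a, b⟩ <;> rfl

/-- The "left idempotent" map `(a,b) ↦ (a,a)`, `0 ↦ 0`. -/
noncomputable def muL {X : Type u} : MatrixUnits X → MatrixUnits X :=
  Option.map fun p => (p.1, p.1)

/-- The "right idempotent" map `(a,b) ↦ (b,b)`, `0 ↦ 0`. -/
noncomputable def muR {X : Type u} : MatrixUnits X → MatrixUnits X :=
  Option.map fun p => (p.2, p.2)

theorem muL_mul {X : Type u} (x : MatrixUnits X) : muL x * x = x := by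
  rcases x with _ | ⟨a, b⟩ <;> simp [muL, mu_mul_def, muMul]

theorem mul_muR {X : Type u} (x : MatrixUnits X) : x * muR x = x := by
  rcases x with _ | ⟨a, b⟩ <;> simp [muR, mu_mul_def, muMul]

theorem muL_mem_band {X : Type u} (x : MatrixUnits X) : muL x ∈ MUBand X := by
  rcases x with _ | ⟨a, b⟩
  · exact Set.mem_insert _ _
  · exact Set.mem_insert_iff.2 (Or.inr ⟨a, rfl⟩)

theorem muR_mem_band {X : Type u} (x : MatrixUnits X) : muR x ∈ MUBand X := by
  rcases x with _ | ⟨a, b⟩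
  · exact Set.mem_insert _ _
  · exact Set.mem_insert_iff.2 (Or.inr ⟨b, rfl⟩)

/-- A topological semigroup of matrix units `B_λ` with compact band is
`H`-closed: its image is closed under any topological-semigroup embedding. -/
theorem matrixUnits_hClosed_of_compact_band
    {X : Type u} [Nonempty X]
    [TopologicalSpace (MatrixUnits X)] [T2Space (MatrixUnits X)]
    [ContinuousMul (MatrixUnits X)]
    (hband : IsCompact (MUBand X)) :
    ∀ (T : Type v) [Semigroup T] [TopologicalSpace T] [T2Space T] [ContinuousMul T]
      (f : MatrixUnits X → T),
      (∀ a b : MatrixUnits X, f (a * b) = f a * f b) →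
      Function.Injective f →
      Topology.IsEmbedding f →
      IsClosed (Set.range f) := by
  intro T _ _ _ _ f hmul hinj hemb
  apply isClosed_of_closure_subset
  intro t ht
  by_contra htr
  rw [mem_closure_iff_ultrafilter] at ht
  obtain ⟨U, hrU, hU⟩ := ht
  set V : Ultrafilter (MatrixUnits X) := U.comap hinj hrU with hV
  have htV : Filter.Tendsto f (V : Filter (MatrixUnits X)) (𝓝 t) := by
    refine Filter.Tendsto.mono_right ?_ hU
    rw [hV, Ultrafilter.coe_comap]
    exact Filter.map_comap_le
  -- limits of the idempotent maps inside the compact band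
  have hLband : MUBand X ∈ V.map muL := by
    rw [Ultrafilter.mem_map]
    exact Filter.univ_mem' muL_mem_band
  have hRband : MUBand X ∈ V.map muR := by
    rw [Ultrafilter.mem_map]
    exact Filter.univ_mem' muR_mem_band
  obtain ⟨e, heB, he⟩ := hband.ultrafilter_le_nhds (V.map muL) (Filter.le_principal_iff.2 hLband)
  obtain ⟨e', heB', he'⟩ := hband.ultrafilter_le_nhds (V.map muR) (Filter.le_principal_iff.2 hRband)
  have hLt : Filter.Tendsto (fun x => f (muL x)) (V : Filter (MatrixUnits X)) (𝓝 (f e)) :=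
    (hemb.continuous.tendsto e).comp he
  have hRt : Filter.Tendsto (fun x => f (muR x)) (V : Filter (MatrixUnits X)) (𝓝 (f e')) :=
    (hemb.continuous.tendsto e').comp he'
  -- f e * t = t
  have het : f e * t = t := by
    have h1 : Filter.Tendsto (fun x => f (muL x) * f x) (V : Filter (MatrixUnits X))
        (𝓝 (f e * t)) := hLt.mul htV
    have h2 : (fun x : MatrixUnits X => f (muL x) * f x) = f := by
      funext x; rw [← hmul, muL_mul]
    rw [h2] at h1
    exact tendsto_nhds_unique h1 htV
  -- t * f e' = t
  have hte : t * f e' = t := by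
    have h1 : Filter.Tendsto (fun x => f x * f (muR x)) (V : Filter (MatrixUnits X))
        (𝓝 (t * f e')) := htV.mul hRt
    have h2 : (fun x : MatrixUnits X => f x * f (muR x)) = f := by
      funext x; rw [← hmul, mul_muR]
    rw [h2] at h1
    exact tendsto_nhds_unique h1 htV
  -- e = some (a,a)
  obtain ⟨a, ha⟩ : ∃ a : X, e = some (a, a) := by
    rcases heB with h | ⟨a, ha⟩
    · exfalso
      subst h
      have h1 : Filter.Tendsto (fun x => f (none : MatrixUnits X) * f x)
          (V : Filter (MatrixUnits X)) (𝓝 (f (none : MatrixUnits X) * t)) :=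
        tendsto_const_nhds.mul htV
      have h2 : (fun x : MatrixUnits X => f (none : MatrixUnits X) * f x)
          = fun _ => f (none : MatrixUnits X) := by
        funext x; rw [← hmul, none_mul']
      rw [h2] at h1
      have h3 : f (none : MatrixUnits X) * t = f (none : MatrixUnits X) :=
        tendsto_nhds_unique h1 tendsto_const_nhds
      exact htr ⟨none, by rw [← h3, het]⟩
    · exact ⟨a, ha⟩
  -- e' = some (b,b)
  obtain ⟨b, hb⟩ : ∃ b : X, e' = some (b, b) := by
    rcases heB' with h | ⟨b, hb⟩
    · exfalso
      subst h
      have h1 : Filter.Tendsto (fun x => f x * f (none : MatrixUnits X))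
          (V : Filter (MatrixUnits X)) (𝓝 (t * f (none : MatrixUnits X))) :=
        htV.mul tendsto_const_nhds
      have h2 : (fun x : MatrixUnits X => f x * f (none : MatrixUnits X))
          = fun _ => f (none : MatrixUnits X) := by
        funext x; rw [← hmul, mul_none']
      rw [h2] at h1
      have h3 : t * f (none : MatrixUnits X) = f (none : MatrixUnits X) :=
        tendsto_nhds_unique h1 tendsto_const_nhds
      exact htr ⟨none, by rw [← h3, hte]⟩
    · exact ⟨b, hb⟩
  subst ha; subst hb
  -- right multiplication by (b,b) forces the second coordinate
  have hAb : {x : MatrixUnits X | ∃ c : X, x = some (c, b)} ∈ V := by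
    rcases V.mem_or_compl_mem {x : MatrixUnits X | ∃ c : X, x = some (c, b)} with h | h
    · exact h
    · exfalso
      have hzero : ∀ x ∈ ({x : MatrixUnits X | ∃ c : X, x = some (c, b)}ᶜ),
          x * some (b, b) = none := by
        intro x hx
        rcases x with _ | ⟨c, d⟩
        · rfl
        · rw [some_mul_some, if_neg]
          intro hdb
          exact hx ⟨c, by rw [hdb]⟩
      have h1 : Filter.Tendsto (fun x : MatrixUnits X => f x * f (some (b, b)))
          (V : Filter (MatrixUnits X)) (𝓝 (t * f (some (b, b)))) :=
        htV.mul tendsto_const_nhds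
      have h2 : Filter.Tendsto (fun x : MatrixUnits X => f x * f (some (b, b)))
          (V : Filter (MatrixUnits X)) (𝓝 (f (none : MatrixUnits X))) := by
        refine Filter.Tendsto.congr' ?_ (tendsto_const_nhds
          (x := f (none : MatrixUnits X)) (f := (V : Filter (MatrixUnits X))))
        filter_upwards [h] with x hx
        rw [← hmul, hzero x hx]
      rw [hte] at h1
      exact htr ⟨none, (tendsto_nhds_unique h2 h1)⟩
  -- left multiplication by (a,a) forces the first coordinate
  have hAa : {x : MatrixUnits X | ∃ d : X, x = some (a, d)} ∈ V := by
    rcases V.mem_or_compl_mem {x : MatrixUnits X | ∃ d : X, x = some (a, d)} with h | h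
    · exact h
    · exfalso
      have hzero : ∀ x ∈ ({x : MatrixUnits X | ∃ d : X, x = some (a, d)}ᶜ),
          some (a, a) * x = none := by
        intro x hx
        rcases x with _ | ⟨c, d⟩
        · exact mul_none' _
        · rw [some_mul_some, if_neg]
          intro hac
          exact hx ⟨d, by rw [hac]⟩
      have h1 : Filter.Tendsto (fun x : MatrixUnits X => f (some (a, a)) * f x)
          (V : Filter (MatrixUnits X)) (𝓝 (f (some (a, a)) * t)) :=
        tendsto_const_nhds.mul htV
      have h2 : Filter.Tendsto (fun x : MatrixUnits X => f (some (a, a)) * f x)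
          (V : Filter (MatrixUnits X)) (𝓝 (f (none : MatrixUnits X))) := by
        refine Filter.Tendsto.congr' ?_ (tendsto_const_nhds
          (x := f (none : MatrixUnits X)) (f := (V : Filter (MatrixUnits X))))
        filter_upwards [h] with x hx
        rw [← hmul, hzero x hx]
      rw [het] at h1
      exact htr ⟨none, (tendsto_nhds_unique h2 h1)⟩
  -- hence V is the principal ultrafilter at (a,b)
  have hsing : {(some (a, b) : MatrixUnits X)} ∈ V := by
    refine Filter.mem_of_superset (Filter.inter_mem hAb hAa) ?_
    rintro x ⟨⟨c, hc⟩, ⟨d, hd⟩⟩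
    subst hd
    simp only [Option.some.injEq, Prod.mk.injEq] at hc
    obtain ⟨h1, h2⟩ := hc
    exact Set.mem_singleton_iff.2 (by rw [h2])
  have hconst : Filter.Tendsto f (V : Filter (MatrixUnits X)) (𝓝 (f (some (a, b)))) := by
    refine Filter.Tendsto.congr' ?_ (tendsto_const_nhds
      (x := f (some (a, b))) (f := (V : Filter (MatrixUnits X))))
    filter_upwards [hsing] with x hx
    rw [Set.mem_singleton_iff.1 hx]
  exact htr ⟨some (a, b), tendsto_nhds_unique hconst htV⟩
end

section
/- Let X be an infinite type and let τ be a topology on the semigroup of matrix units B_λ (λ = |X|) making it a topological semigroup. Suppose that there exist an open neighbourhood U of the zero 0 in (B_λ, τ) and an infinite subset A ⊆ X such that U contains no element (a,b) with a ∈ A or b ∈ A. Then (B_λ, τ) is not H-closed: there exist a topological semigroup T and an injective semigroup homomorphism f : B_λ → T that is a topological embedding whose image f(B_λ) is not closed in T. -/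
open scoped Classical

universe u v

section AuxLemmas

variable {X : Type u}

lemma mu_none_mul (t : MatrixUnits X) : (none : MatrixUnits X) * t = none := rfl

lemma mu_mul_none (s : MatrixUnits X) : s * (none : MatrixUnits X) = none := by
  rcases s with _ | ⟨a, b⟩ <;> rfl

lemma mu_some_some (a b c d : X) :
    (some (a, b) : MatrixUnits X) * some (c, d) = if b = c then some (a, d) else none := rfl

/-- Every nonzero matrix unit is an isolated point in any Hausdorff semigroup topology. -/
lemma mu_isolated [TopologicalSpace (MatrixUnits X)] [T2Space (MatrixUnits X)]
    [ContinuousMul (MatrixUnits X)] (a b : X) :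
    IsOpen ({some (a, b)} : Set (MatrixUnits X)) := by
  obtain ⟨Vx, V0, hVx, hV0, hxVx, h0V0, hdis⟩ :=
    t2_separation (show (some (a, b) : MatrixUnits X) ≠ none by simp)
  have h0nVx : (none : MatrixUnits X) ∉ Vx := fun h => Set.disjoint_left.mp hdis h h0V0
  have hcont : Continuous (fun s : MatrixUnits X => (some (a, a) * s) * some (b, b)) :=
    (continuous_const.mul continuous_id).mul continuous_const
  have hkey : ({some (a, b)} : Set (MatrixUnits X)) =
      (fun s : MatrixUnits X => (some (a, a) * s) * some (b, b)) ⁻¹' Vx := by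
    ext s
    simp only [Set.mem_singleton_iff, Set.mem_preimage]
    constructor
    · rintro rfl
      have : (some (a, a) : MatrixUnits X) * some (a, b) * some (b, b) = some (a, b) := by
        simp [mu_some_some]
      rw [this]; exact hxVx
    · intro hs
      rcases s with _ | ⟨c, d⟩
      · exact absurd (by simpa [mu_mul_none, mu_none_mul] using hs) h0nVx
      · by_cases hac : a = c
        · subst hac
          by_cases hdb : d = b
          · subst hdb; rfl
          · exfalso
            have : (some (a, a) : MatrixUnits X) * some (a, d) * some (b, b) = none := by
              simp [mu_some_some, hdb]
            rw [this] at hs; exact h0nVx hs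
        · exfalso
          have : (some (a, a) : MatrixUnits X) * some (c, d) * some (b, b) = none := by
            simp [mu_some_some, hac, mu_none_mul]
          rw [this] at hs; exact h0nVx hs
  rw [hkey]
  exact hcont.isOpen_preimage _ hVx

end AuxLemmas

section OptSemigroup

variable {X : Type u}

/-- Multiplication on `Option (MatrixUnits X)`: the new point acts like a second zero,
with all its products equal to the old zero. -/
noncomputable def optMul : Option (MatrixUnits X) → Option (MatrixUnits X) → Option (MatrixUnits X)
  | some s, some t => some (s * t)
  | _, _ => some none

noncomputable instance : Semigroup (Option (MatrixUnits X)) where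
  mul := optMul
  mul_assoc x y z := by
    show optMul (optMul x y) z = optMul x (optMul y z)
    rcases x with _ | s <;> rcases y with _ | t <;> rcases z with _ | u <;>
      simp only [optMul, mu_none_mul, mu_mul_none, mul_assoc]

lemma omul_some_some (s t : MatrixUnits X) :
    (some s : Option (MatrixUnits X)) * some t = some (s * t) := rfl

lemma omul_none_left (z : Option (MatrixUnits X)) :
    (none : Option (MatrixUnits X)) * z = some none := by
  rcases z with _ | s <;> rfl

lemma omul_none_right (z : Option (MatrixUnits X)) :
    z * (none : Option (MatrixUnits X)) = some none := by
  rcases z with _ | s <;> rfl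

/-- The topology on `Option (MatrixUnits X)` where `B` keeps its topology and
the new point `none` has neighbourhoods containing tails of the sequence `x`. -/
noncomputable def tOpt (x : ℕ → MatrixUnits X) [TopologicalSpace (MatrixUnits X)] :
    TopologicalSpace (Option (MatrixUnits X)) where
  IsOpen O := IsOpen (Option.some ⁻¹' O) ∧ (none ∈ O → ∃ N, ∀ n, N ≤ n → some (x n) ∈ O)
  isOpen_univ := ⟨isOpen_univ, fun _ => ⟨0, fun _ _ => trivial⟩⟩
  isOpen_inter O₁ O₂ h₁ h₂ := by
    refine ⟨h₁.1.inter h₂.1, fun h => ?_⟩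
    obtain ⟨N₁, hN₁⟩ := h₁.2 h.1
    obtain ⟨N₂, hN₂⟩ := h₂.2 h.2
    exact ⟨max N₁ N₂, fun n hn =>
      ⟨hN₁ n (le_trans (le_max_left _ _) hn), hN₂ n (le_trans (le_max_right _ _) hn)⟩⟩
  isOpen_sUnion S hS := by
    constructor
    · rw [Set.preimage_sUnion]
      exact isOpen_biUnion fun O hO => (hS O hO).1
    · rintro ⟨O, hO, hnO⟩
      obtain ⟨N, hN⟩ := (hS O hO).2 hnO
      exact ⟨N, fun n hn => ⟨O, hO, hN n hn⟩⟩

end OptSemigroup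

/-- If there is an open neighbourhood `U` of the zero of the infinite
topological semigroup of matrix units `B_λ` and an infinite set `A ⊆ X` such that `U`
contains no element `(a,b)` with `a ∈ A` or `b ∈ A`, then `B_λ` is not `H`-closed:
it admits a topological-semigroup embedding with non-closed image. -/
theorem matrixUnits_not_hClosed
    {X : Type u} [Infinite X]
    [TopologicalSpace (MatrixUnits X)] [T2Space (MatrixUnits X)]
    [ContinuousMul (MatrixUnits X)]
    (U : Set (MatrixUnits X)) (hUopen : IsOpen U) (h0U : (none : MatrixUnits X) ∈ U)
    (A : Set X) (hA : A.Infinite)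
    (hUA : ∀ a b : X, a ∈ A ∨ b ∈ A → (some (a, b) : MatrixUnits X) ∉ U) :
    ¬ ∀ (T : Type u) [Semigroup T] [TopologicalSpace T] [T2Space T] [ContinuousMul T]
        (f : MatrixUnits X → T),
        (∀ a b : MatrixUnits X, f (a * b) = f a * f b) →
        Function.Injective f →
        Topology.IsEmbedding f →
        IsClosed (Set.range f) := by
  intro h
  classical
  -- a sequence of distinct elements of A
  set e := hA.natEmbedding with he
  set g : ℕ → X := fun n => (e n : X) with hgdef
  have hgA : ∀ n, g n ∈ A := fun n => (e n).2
  have hginj : Function.Injective g := fun m n hmn => e.injective (Subtype.ext hmn)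
  set x : ℕ → MatrixUnits X := fun n => some (g (2 * n), g (2 * n + 1)) with hx
  have hxinj : Function.Injective x := by
    intro m n hmn
    simp only [hx, Option.some.injEq, Prod.mk.injEq] at hmn
    have := hginj hmn.1
    omega
  have hxx : ∀ n m, x n * x m = none := by
    intro n m
    have hne : g (2 * n + 1) ≠ g (2 * m) := fun hc => by have := hginj hc; omega
    simp [hx, mu_some_some, hne]
  have hxU : ∀ n, x n ∉ U := fun n => hUA _ _ (Or.inl (hgA _))
  have hUxl : ∀ v ∈ U, ∀ n, x n * v = none := by
    intro v hv n
    rcases v with _ | ⟨c, d⟩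
    · exact mu_mul_none _
    · have hc : c ∉ A := fun hc => hUA c d (Or.inl hc) hv
      have hne : g (2 * n + 1) ≠ c := fun hh => hc (hh ▸ hgA _)
      simp [hx, mu_some_some, hne]
  have hUxr : ∀ v ∈ U, ∀ n, v * x n = none := by
    intro v hv n
    rcases v with _ | ⟨c, d⟩
    · exact mu_none_mul _
    · have hd : d ∉ A := fun hd => hUA c d (Or.inr hd) hv
      have hne : d ≠ g (2 * n) := fun hh => hd (hh ▸ hgA _)
      simp [hx, mu_some_some, hne]
  have hxt : ∀ (n : ℕ) (c d : X), g (2 * n + 1) ≠ c → x n * some (c, d) = none := by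
    intro n c d hne
    simp [hx, mu_some_some, hne]
  have htx : ∀ (n : ℕ) (c d : X), d ≠ g (2 * n) → some (c, d) * x n = none := by
    intro n c d hne
    simp [hx, mu_some_some, hne]
  have hev1 : ∀ c : X, ∃ N, ∀ n, N ≤ n → g (2 * n + 1) ≠ c := by
    intro c
    by_cases hc : ∃ k, g (2 * k + 1) = c
    · obtain ⟨k, hk⟩ := hc
      refine ⟨k + 1, fun n hn hEq => ?_⟩
      have := hginj (hEq.trans hk.symm)
      omega
    · exact ⟨0, fun n _ hEq => hc ⟨n, hEq⟩⟩
  have hev2 : ∀ d : X, ∃ N, ∀ n, N ≤ n → g (2 * n) ≠ d := by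
    intro d
    by_cases hd : ∃ k, g (2 * k) = d
    · obtain ⟨k, hk⟩ := hd
      refine ⟨k + 1, fun n hn hEq => ?_⟩
      have := hginj (hEq.trans hk.symm)
      omega
    · exact ⟨0, fun n _ hEq => hd ⟨n, hEq⟩⟩
  have hevx : ∀ t : MatrixUnits X, ∃ N, ∀ n, N ≤ n → x n ≠ t := by
    intro t
    by_cases ht : ∃ k, x k = t
    · obtain ⟨k, hk⟩ := ht
      refine ⟨k + 1, fun n hn hEq => ?_⟩
      have := hxinj (hEq.trans hk.symm)
      omega
    · exact ⟨0, fun n _ hEq => ht ⟨n, hEq⟩⟩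
  -- tails of the sequence are open
  have htail : ∀ N : ℕ, IsOpen {s : MatrixUnits X | ∃ n, N ≤ n ∧ s = x n} := by
    intro N
    have hEq : {s : MatrixUnits X | ∃ n, N ≤ n ∧ s = x n}
        = ⋃ n, ⋃ (_ : N ≤ n), ({x n} : Set (MatrixUnits X)) := by
      ext s
      simp [eq_comm]
    rw [hEq]
    refine isOpen_iUnion fun n => isOpen_iUnion fun _ => ?_
    have := mu_isolated (g (2 * n)) (g (2 * n + 1))
    simpa [hx] using this
  -- the topology on the extended semigroup
  letI tT : TopologicalSpace (Option (MatrixUnits X)) := tOpt x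
  have isOpen_iff : ∀ O : Set (Option (MatrixUnits X)),
      IsOpen O ↔ IsOpen (Option.some ⁻¹' O) ∧
        (none ∈ O → ∃ N, ∀ n, N ≤ n → some (x n) ∈ O) := fun O => Iff.rfl
  have hlift : ∀ V : Set (MatrixUnits X), IsOpen V →
      IsOpen (Option.some '' V : Set (Option (MatrixUnits X))) := by
    intro V hV
    rw [isOpen_iff]
    refine ⟨?_, fun hn => absurd hn (by simp)⟩
    rw [Set.preimage_image_eq V (Option.some_injective _)]
    exact hV
  set P : ℕ → Set (Option (MatrixUnits X)) :=
    fun N => insert none (Option.some '' {s | ∃ n, N ≤ n ∧ s = x n}) with hP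
  have hPopen : ∀ N, IsOpen (P N) := by
    intro N
    rw [isOpen_iff]
    constructor
    · have hEq : Option.some ⁻¹' (P N) = {s : MatrixUnits X | ∃ n, N ≤ n ∧ s = x n} := by
        ext s
        simp [hP]
      rw [hEq]
      exact htail N
    · exact fun _ => ⟨N, fun n hn => Set.mem_insert_iff.2 (Or.inr ⟨x n, ⟨n, hn, rfl⟩, rfl⟩)⟩
  have hmemP : ∀ N, (none : Option (MatrixUnits X)) ∈ P N := fun N => Set.mem_insert _ _
  have hPelim : ∀ N (z : Option (MatrixUnits X)), z ∈ P N →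
      z = none ∨ ∃ n, N ≤ n ∧ z = some (x n) := by
    intro N z hz
    rcases Set.mem_insert_iff.1 hz with hz | ⟨s, ⟨n, hn, rfl⟩, rfl⟩
    · exact Or.inl hz
    · exact Or.inr ⟨n, hn, rfl⟩
  -- Hausdorff
  haveI hT2 : T2Space (Option (MatrixUnits X)) := by
    constructor
    intro z w hzw
    have key : ∀ t : MatrixUnits X, ∃ u v : Set (Option (MatrixUnits X)),
        IsOpen u ∧ IsOpen v ∧ (none : Option (MatrixUnits X)) ∈ u ∧ some t ∈ v ∧ Disjoint u v := by
      intro t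
      rcases t with _ | ⟨c, d⟩
      · refine ⟨P 0, Option.some '' U, hPopen 0, hlift U hUopen, hmemP 0, ⟨none, h0U, rfl⟩, ?_⟩
        rw [Set.disjoint_left]
        intro z hz hz'
        obtain ⟨u', hu', hu''⟩ := hz'
        rcases hPelim 0 z hz with rfl | ⟨n, -, rfl⟩
        · exact Option.some_ne_none _ hu''
        · obtain rfl := Option.some_injective _ hu''
          exact hxU n hu'
      · obtain ⟨N, hN⟩ := hevx (some (c, d))
        refine ⟨P N, Option.some '' {some (c, d)}, hPopen N, hlift _ (mu_isolated c d),
          hmemP N, ⟨some (c, d), rfl, rfl⟩, ?_⟩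
        rw [Set.disjoint_left]
        intro z hz hz'
        obtain ⟨u', hu', hu''⟩ := hz'
        rcases hPelim N z hz with rfl | ⟨n, hn, rfl⟩
        · exact Option.some_ne_none _ hu''
        · obtain rfl := Option.some_injective _ hu''
          rw [Set.mem_singleton_iff] at hu'
          exact hN n hn hu'
    rcases z with _ | s <;> rcases w with _ | t
    · exact absurd rfl hzw
    · exact key t
    · obtain ⟨u, v, hu, hv, hnu, htv, hdis⟩ := key s
      exact ⟨v, u, hv, hu, htv, hnu, hdis.symm⟩
    · have hst : s ≠ t := fun hc => hzw (by rw [hc])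
      obtain ⟨u, v, hu, hv, hsu, htv, hdis⟩ := t2_separation hst
      exact ⟨Option.some '' u, Option.some '' v, hlift u hu, hlift v hv,
        ⟨s, hsu, rfl⟩, ⟨t, htv, rfl⟩,
        (Set.disjoint_image_iff (Option.some_injective _)).2 hdis⟩
  -- continuity of multiplication
  haveI hCM : ContinuousMul (Option (MatrixUnits X)) := by
    constructor
    rw [continuous_def]
    intro O hO
    rw [isOpen_prod_iff]
    rintro (_ | s) (_ | t) hmem
    · -- (p, p)
      have h0 : (some (none : MatrixUnits X) : Option (MatrixUnits X)) ∈ O := hmem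
      refine ⟨P 0, P 0, hPopen 0, hPopen 0, hmemP 0, hmemP 0, ?_⟩
      rintro ⟨z, w⟩ ⟨hz, hw⟩
      show z * w ∈ O
      rcases hPelim 0 z hz with rfl | ⟨n, -, rfl⟩ <;>
        rcases hPelim 0 w hw with rfl | ⟨m, -, rfl⟩
      · rw [omul_none_left]; exact h0
      · rw [omul_none_left]; exact h0
      · rw [omul_none_right]; exact h0
      · rw [omul_some_some, hxx n m]; exact h0
    · -- (p, some t)
      have h0 : (some (none : MatrixUnits X) : Option (MatrixUnits X)) ∈ O := by
        have : (none : Option (MatrixUnits X)) * some t = some none := omul_none_left _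
        rw [← this]; exact hmem
      rcases t with _ | ⟨c, d⟩
      · -- t = zero of B: use U
        refine ⟨P 0, Option.some '' U, hPopen 0, hlift U hUopen, hmemP 0, ⟨none, h0U, rfl⟩, ?_⟩
        rintro ⟨z, w⟩ ⟨hz, hw⟩
        obtain ⟨v', hv', rfl⟩ := hw
        show z * some v' ∈ O
        rcases hPelim 0 z hz with rfl | ⟨n, -, rfl⟩
        · rw [omul_none_left]; exact h0
        · rw [omul_some_some, hUxl v' hv' n]; exact h0
      · obtain ⟨N, hN⟩ := hev1 c
        refine ⟨P N, Option.some '' {some (c, d)}, hPopen N, hlift _ (mu_isolated c d),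
          hmemP N, ⟨some (c, d), rfl, rfl⟩, ?_⟩
        rintro ⟨z, w⟩ ⟨hz, hw⟩
        obtain ⟨v', hv', rfl⟩ := hw
        rw [Set.mem_singleton_iff] at hv'
        subst hv'
        show z * some (some (c, d)) ∈ O
        rcases hPelim N z hz with rfl | ⟨n, hn, rfl⟩
        · rw [omul_none_left]; exact h0
        · rw [omul_some_some, hxt n c d (hN n hn)]; exact h0
    · -- (some s, p)
      have h0 : (some (none : MatrixUnits X) : Option (MatrixUnits X)) ∈ O := by
        have : (some s : Option (MatrixUnits X)) * none = some none := omul_none_right _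
        rw [← this]; exact hmem
      rcases s with _ | ⟨c, d⟩
      · refine ⟨Option.some '' U, P 0, hlift U hUopen, hPopen 0, ⟨none, h0U, rfl⟩, hmemP 0, ?_⟩
        rintro ⟨z, w⟩ ⟨hz, hw⟩
        obtain ⟨v', hv', rfl⟩ := hz
        show some v' * w ∈ O
        rcases hPelim 0 w hw with rfl | ⟨n, -, rfl⟩
        · rw [omul_none_right]; exact h0
        · rw [omul_some_some, hUxr v' hv' n]; exact h0
      · obtain ⟨N, hN⟩ := hev2 d
        refine ⟨Option.some '' {some (c, d)}, P N, hlift _ (mu_isolated c d), hPopen N,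
          ⟨some (c, d), rfl, rfl⟩, hmemP N, ?_⟩
        rintro ⟨z, w⟩ ⟨hz, hw⟩
        obtain ⟨v', hv', rfl⟩ := hz
        rw [Set.mem_singleton_iff] at hv'
        subst hv'
        show some (some (c, d)) * w ∈ O
        rcases hPelim N w hw with rfl | ⟨n, hn, rfl⟩
        · rw [omul_none_right]; exact h0
        · rw [omul_some_some, htx n c d (fun hc' => hN n hn hc'.symm)]; exact h0
    · -- (some s, some t)
      have hst : s * t ∈ Option.some ⁻¹' O := by
        have hm : (some s : Option (MatrixUnits X)) * some t ∈ O := hmem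
        rwa [omul_some_some] at hm
      have hO' : IsOpen (Option.some ⁻¹' O) := ((isOpen_iff O).1 hO).1
      have hpre : IsOpen ((fun p : MatrixUnits X × MatrixUnits X => p.1 * p.2) ⁻¹' (Option.some ⁻¹' O)) :=
        (continuous_mul).isOpen_preimage _ hO'
      obtain ⟨u, v, hu, hv, hsu, htv, hsub⟩ := isOpen_prod_iff.1 hpre s t hst
      refine ⟨Option.some '' u, Option.some '' v, hlift u hu, hlift v hv,
        ⟨s, hsu, rfl⟩, ⟨t, htv, rfl⟩, ?_⟩
      rintro ⟨z, w⟩ ⟨⟨s', hs', rfl⟩, ⟨t', ht', rfl⟩⟩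
      show (some s' : Option (MatrixUnits X)) * some t' ∈ O
      rw [omul_some_some]
      exact hsub (Set.mk_mem_prod hs' ht')
  -- the embedding
  have hemb : Topology.IsEmbedding (fun s : MatrixUnits X => (some s : Option (MatrixUnits X))) := by
    refine ⟨⟨?_⟩, Option.some_injective _⟩
    refine TopologicalSpace.ext_iff.2 fun V => ?_
    rw [isOpen_induced_iff]
    constructor
    · intro hV
      exact ⟨Option.some '' V, hlift V hV, Set.preimage_image_eq V (Option.some_injective _)⟩
    · rintro ⟨O, hO, rfl⟩
      exact ((isOpen_iff O).1 hO).1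
  -- the range is not closed
  have hnc : ¬ IsClosed (Set.range (fun s : MatrixUnits X => (some s : Option (MatrixUnits X)))) := by
    intro hcl
    have hopen := hcl.isOpen_compl
    have hcompl : (Set.range (fun s : MatrixUnits X => (some s : Option (MatrixUnits X))))ᶜ
        = {(none : Option (MatrixUnits X))} := by
      ext z
      rcases z with _ | s <;> simp
    rw [hcompl] at hopen
    obtain ⟨N, hN⟩ := ((isOpen_iff _).1 hopen).2 rfl
    exact Option.some_ne_none _ (Set.mem_singleton_iff.1 (hN N le_rfl))
  exact hnc (h (Option (MatrixUnits X)) (fun s => some s) (fun a b => rfl)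
    (Option.some_injective _) hemb)
end
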